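/- arXiv:2602.14912 — 2 statements merged into one kernel-verified Lean document; each statement's English description precedes it below -/
import Mathlib

section
/- Under the hypotheses of the exact Taylor expansion lemma (Hilbert space H, bounded symmetric-in-first-two-arguments trilinear form b with constant C_b, solution Ψ of the quadratic equation N(Ψ;·)=0 satisfying the linearized inf-sup condition with constant β > 0), any w ∈ H satisfies β‖w−Ψ‖ ≤ sup_{‖θ‖=1} |N(w;θ)| + C_b ‖w−Ψ‖². -/
/-- A posteriori bound from the linearized inf-sup condition:
`β‖w−Ψ‖ ≤ sup_{‖θ‖=1} |N(w;θ)| + C_b ‖w−Ψ‖²`. -/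
theorem infsup_error_bound
    {H : Type*} [NormedAddCommGroup H] [InnerProductSpace ℝ H] [CompleteSpace H]
    (a : H →ₗ[ℝ] H →ₗ[ℝ] ℝ) (b : H →ₗ[ℝ] H →ₗ[ℝ] H →ₗ[ℝ] ℝ) (F : H →ₗ[ℝ] ℝ)
    (Ca Cb β : ℝ) (hβ : 0 < β)
    (ha_bound : ∀ u v : H, |a u v| ≤ Ca * ‖u‖ * ‖v‖)
    (hb_bound : ∀ u v w : H, |b u v w| ≤ Cb * ‖u‖ * ‖v‖ * ‖w‖)
    (hb_symm : ∀ u v w : H, b u v w = b v u w)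
    (Ψ : H)
    (hinfsup : ∀ φ : H, β * ‖φ‖ ≤
      sSup {r : ℝ | ∃ θ : H, θ ≠ 0 ∧ r = (a φ θ + 2 * b Ψ φ θ) / ‖θ‖})
    (hΨ : ∀ θ : H, a Ψ θ + b Ψ Ψ θ - F θ = 0) :
    ∀ w : H, β * ‖w - Ψ‖ ≤
      sSup {r : ℝ | ∃ θ : H, ‖θ‖ = 1 ∧ r = |a w θ + b w w θ - F θ|}
        + Cb * ‖w - Ψ‖ ^ 2 := by
  intro w
  set φ : H := w - Ψ with hφdef
  have hw : w = φ + Ψ := by simp [hφdef]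
  set S2 : Set ℝ := {r : ℝ | ∃ θ : H, ‖θ‖ = 1 ∧ r = |a w θ + b w w θ - F θ|} with hS2def
  have key : ∀ θ : H, a w θ + b w w θ - F θ = a φ θ + 2 * b Ψ φ θ + b φ φ θ := by
    intro θ
    have hF := hΨ θ
    have hsymm := hb_symm φ Ψ θ
    rw [hw]
    simp only [map_add, LinearMap.add_apply]
    linarith
  -- upper bound for S2
  set M : ℝ := Ca * ‖φ‖ + 2 * (Cb * ‖Ψ‖ * ‖φ‖) + Cb * ‖φ‖ ^ 2 with hM
  have hS2bdd : ∀ r ∈ S2, r ≤ M := by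
    rintro r ⟨θ, hθ, rfl⟩
    rw [key θ]
    have h1 := ha_bound φ θ
    have h2 := hb_bound Ψ φ θ
    have h3 := hb_bound φ φ θ
    rw [hθ] at h1 h2 h3
    calc |a φ θ + 2 * b Ψ φ θ + b φ φ θ|
        ≤ |a φ θ + 2 * b Ψ φ θ| + |b φ φ θ| := abs_add_le _ _
      _ ≤ |a φ θ| + |2 * b Ψ φ θ| + |b φ φ θ| := by
          have := abs_add_le (a φ θ) (2 * b Ψ φ θ); linarith
      _ ≤ M := by
          rw [abs_mul]
          simp only [abs_two]
          have : Cb * ‖φ‖ * ‖φ‖ * 1 = Cb * ‖φ‖ ^ 2 := by ring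
          nlinarith [abs_nonneg (b Ψ φ θ)]
  have hS2above : BddAbove S2 := ⟨M, fun r hr => hS2bdd r hr⟩
  have hS2nonneg : 0 ≤ sSup S2 := Real.sSup_nonneg (by
    rintro r ⟨θ, hθ, rfl⟩; exact abs_nonneg _)
  have hCbφ : 0 ≤ Cb * ‖φ‖ ^ 2 := by
    rcases eq_or_ne φ 0 with h | h
    · simp [h]
    · have h3 := hb_bound φ φ φ
      have hφpos : 0 < ‖φ‖ := norm_pos_iff.mpr h
      nlinarith [abs_nonneg (b φ φ φ)]
  calc β * ‖φ‖ ≤ sSup {r : ℝ | ∃ θ : H, θ ≠ 0 ∧ r = (a φ θ + 2 * b Ψ φ θ) / ‖θ‖} :=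
        hinfsup φ
    _ ≤ sSup S2 + Cb * ‖φ‖ ^ 2 := by
        apply Real.sSup_le _ (by linarith)
        rintro r ⟨θ, hθ, rfl⟩
        have hθpos : 0 < ‖θ‖ := norm_pos_iff.mpr hθ
        set u : H := ‖θ‖⁻¹ • θ with hu
        have hun : ‖u‖ = 1 := by
          rw [hu, norm_smul, norm_inv, norm_norm, inv_mul_cancel₀ hθpos.ne']
        have hval : a φ u + 2 * b Ψ φ u = (a φ θ + 2 * b Ψ φ θ) / ‖θ‖ := by
          simp only [hu, map_smul, smul_eq_mul]
          field_simp
        have hmem : |a w u + b w w u - F u| ∈ S2 := ⟨u, hun, rfl⟩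
        have hle : |a w u + b w w u - F u| ≤ sSup S2 := le_csSup hS2above hmem
        have hbu := hb_bound φ φ u
        rw [hun, mul_one] at hbu
        have hkey := key u
        have : (a φ θ + 2 * b Ψ φ θ) / ‖θ‖ = (a w u + b w w u - F u) - b φ φ u := by
          rw [hkey]; linarith [hval]
        rw [this]
        have h1 : a w u + b w w u - F u ≤ |a w u + b w w u - F u| := le_abs_self _
        have h2 : -b φ φ u ≤ |b φ φ u| := neg_le_abs _
        have : Cb * ‖φ‖ * ‖φ‖ = Cb * ‖φ‖ ^ 2 := by ring
        linarith
end

section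
/- In the setting of the previous lemma, if additionally ‖w−Ψ‖ ≤ β/(2 C_b), then ‖w−Ψ‖ ≤ (2/β) sup_{‖θ‖=1} |N(w;θ)| (absorption of the quadratic term). -/
/-- Absorption of the quadratic term: if `‖w−Ψ‖ ≤ β/(2C_b)` then
`‖w−Ψ‖ ≤ (2/β) sup_{‖θ‖=1} |N(w;θ)|`. -/
theorem infsup_error_bound_absorbed
    {H : Type*} [NormedAddCommGroup H] [InnerProductSpace ℝ H] [CompleteSpace H]
    (a : H →ₗ[ℝ] H →ₗ[ℝ] ℝ) (b : H →ₗ[ℝ] H →ₗ[ℝ] H →ₗ[ℝ] ℝ) (F : H →ₗ[ℝ] ℝ)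
    (Ca Cb β : ℝ) (hβ : 0 < β) (hCb : 0 < Cb)
    (ha_bound : ∀ u v : H, |a u v| ≤ Ca * ‖u‖ * ‖v‖)
    (hb_bound : ∀ u v w : H, |b u v w| ≤ Cb * ‖u‖ * ‖v‖ * ‖w‖)
    (hb_symm : ∀ u v w : H, b u v w = b v u w)
    (Ψ : H)
    (hinfsup : ∀ φ : H, β * ‖φ‖ ≤
      sSup {r : ℝ | ∃ θ : H, θ ≠ 0 ∧ r = (a φ θ + 2 * b Ψ φ θ) / ‖θ‖})
    (hΨ : ∀ θ : H, a Ψ θ + b Ψ Ψ θ - F θ = 0) :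
    ∀ w : H, ‖w - Ψ‖ ≤ β / (2 * Cb) →
      ‖w - Ψ‖ ≤ (2 / β) *
        sSup {r : ℝ | ∃ θ : H, ‖θ‖ = 1 ∧ r = |a w θ + b w w θ - F θ|} := by
  intro w hw
  set φ : H := w - Ψ with hφdef
  set B : Set ℝ := {r : ℝ | ∃ θ : H, ‖θ‖ = 1 ∧ r = |a w θ + b w w θ - F θ|} with hBdef
  set S : ℝ := sSup B with hSdef
  have hSnonneg : 0 ≤ S := Real.sSup_nonneg (by
    rintro r ⟨θ, -, rfl⟩; exact abs_nonneg _)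
  -- expansion of the residual
  have hexp : ∀ θ : H, a w θ + b w w θ - F θ = a φ θ + 2 * b Ψ φ θ + b φ φ θ := by
    intro θ
    have hw' : w = Ψ + φ := by simp [hφdef]
    have h0 := hΨ θ
    have hs := hb_symm φ Ψ θ
    rw [hw']
    simp only [map_add, LinearMap.add_apply]
    linarith
  rcases eq_or_ne φ 0 with h0 | h0
  · rw [h0]
    simp only [norm_zero]
    positivity
  · -- B is bounded above
    have hBbdd : BddAbove B := by
      refine ⟨Ca * ‖φ‖ + 2 * (Cb * ‖Ψ‖ * ‖φ‖) + Cb * ‖φ‖ * ‖φ‖, ?_⟩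
      rintro r ⟨θ, hθ, rfl⟩
      have h1 := ha_bound φ θ
      have h2 := hb_bound Ψ φ θ
      have h3 := hb_bound φ φ θ
      rw [hθ] at h1 h2 h3
      calc |a w θ + b w w θ - F θ| = |a φ θ + 2 * b Ψ φ θ + b φ φ θ| := by rw [hexp θ]
        _ ≤ |a φ θ| + 2 * |b Ψ φ θ| + |b φ φ θ| := by
            calc |a φ θ + 2 * b Ψ φ θ + b φ φ θ|
                ≤ |a φ θ + 2 * b Ψ φ θ| + |b φ φ θ| := abs_add_le _ _
              _ ≤ |a φ θ| + |2 * b Ψ φ θ| + |b φ φ θ| := by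
                  have := abs_add_le (a φ θ) (2 * b Ψ φ θ); linarith
              _ = |a φ θ| + 2 * |b Ψ φ θ| + |b φ φ θ| := by
                  rw [abs_mul]; norm_num
        _ ≤ Ca * ‖φ‖ + 2 * (Cb * ‖Ψ‖ * ‖φ‖) + Cb * ‖φ‖ * ‖φ‖ := by
            simp only [mul_one] at h1 h2 h3; linarith
    -- each element of the inf-sup set is ≤ S + Cb‖φ‖²
    have hkey : ∀ r ∈ {r : ℝ | ∃ θ : H, θ ≠ 0 ∧ r = (a φ θ + 2 * b Ψ φ θ) / ‖θ‖},
        r ≤ S + Cb * ‖φ‖ * ‖φ‖ := by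
      rintro r ⟨θ, hθ, rfl⟩
      have hθn : (0:ℝ) < ‖θ‖ := norm_pos_iff.mpr hθ
      set θ' : H := ‖θ‖⁻¹ • θ with hθ'def
      have hθ'1 : ‖θ'‖ = 1 := by
        rw [hθ'def, norm_smul, norm_inv, norm_norm, inv_mul_cancel₀ hθn.ne']
      have hmem : |a w θ' + b w w θ' - F θ'| ∈ B := ⟨θ', hθ'1, rfl⟩
      have hle : |a w θ' + b w w θ' - F θ'| ≤ S := le_csSup hBbdd hmem
      have hval : |a w θ' + b w w θ'- F θ'| = |a w θ + b w w θ - F θ| / ‖θ‖ := by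
        rw [hθ'def]
        simp only [map_smul, LinearMap.smul_apply, smul_eq_mul]
        rw [show (‖θ‖⁻¹ * (a w) θ + ‖θ‖⁻¹ * ((b w) w) θ - ‖θ‖⁻¹ * F θ)
            = ‖θ‖⁻¹ * (a w θ + b w w θ - F θ) by ring, abs_mul, abs_inv, abs_norm,
          inv_mul_eq_div]
      have hres : a φ θ + 2 * b Ψ φ θ ≤ |a w θ + b w w θ - F θ| + Cb * ‖φ‖ * ‖φ‖ * ‖θ‖ := by
        have h3 := hb_bound φ φ θ
        have habs : a φ θ + 2 * b Ψ φ θ ≤ |a w θ + b w w θ - F θ| + |b φ φ θ| := by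
          have h := hexp θ
          have := le_abs_self (a w θ + b w w θ - F θ)
          have := neg_abs_le (b φ φ θ)
          linarith [le_abs_self (b φ φ θ)]
        linarith
      rw [div_le_iff₀ hθn]
      have : |a w θ + b w w θ - F θ| / ‖θ‖ ≤ S := by
        rw [← hval]; exact hle
      have h4 : |a w θ + b w w θ - F θ| ≤ S * ‖θ‖ := (div_le_iff₀ hθn).mp this
      nlinarith [hθn, norm_nonneg φ]
    have hsup : sSup {r : ℝ | ∃ θ : H, θ ≠ 0 ∧ r = (a φ θ + 2 * b Ψ φ θ) / ‖θ‖}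
        ≤ S + Cb * ‖φ‖ * ‖φ‖ := by
      refine Real.sSup_le hkey ?_
      have : 0 ≤ Cb * ‖φ‖ * ‖φ‖ := by positivity
      linarith
    have hmain : β * ‖φ‖ ≤ S + Cb * ‖φ‖ * ‖φ‖ := le_trans (hinfsup φ) hsup
    have hquad : Cb * ‖φ‖ * ‖φ‖ ≤ (β / 2) * ‖φ‖ := by
      have hn : 0 ≤ ‖φ‖ := norm_nonneg φ
      have : Cb * ‖φ‖ ≤ β / 2 := by
        calc Cb * ‖φ‖ ≤ Cb * (β / (2 * Cb)) := mul_le_mul_of_nonneg_left hw hCb.le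
          _ = β / 2 := by field_simp
      nlinarith
    have : (β / 2) * ‖φ‖ ≤ S := by linarith
    rw [div_mul_eq_mul_div, le_div_iff₀ hβ]
    nlinarith
end
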